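/- (Lagrange, 1768) If x is a quadratic irrational real number, then its sequence of partial quotients (a_n) is eventually periodic: there exist N ≥ 0 and T ≥ 1 such that a_{n+T} = a_n for all n ≥ N. -/

import Mathlib

/-- The complete quotients of a real number `x`:
`cq x 0 = x` and `cq x (n+1) = 1 / (cq x n - ⌊cq x n⌋)`. -/
noncomputable def cq (x : ℝ) : ℕ → ℝ
  | 0 => x
  | n + 1 => (Int.fract (cq x n))⁻¹

/-- The partial quotients of a real number `x`: `pq x n = ⌊cq x n⌋`. -/
noncomputable def pq (x : ℝ) (n : ℕ) : ℤ := ⌊cq x n⌋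

/-!
The complete quotients `xₙ` of `x` are roots of integer quadratics `aₙ X² + bₙ X + cₙ`, each
obtained from the previous one by the substitution `X = ⌊xₙ⌋ + 1 / Y`, so all of them have the
discriminant `D` of the equation of `x`. Their conjugate roots `yₙ` obey the same recursion
`yₙ₊₁ = 1 / (yₙ - ⌊xₙ⌋)`. As long as `⌊xₙ⌋ < yₙ`, the identity `aₙ₊₁ = aₙ (⌊xₙ⌋ - xₙ) (⌊xₙ⌋ - yₙ)`
makes `|aₙ|` strictly decrease, so eventually `yₙ < ⌊xₙ⌋`, and from then on `-1 < yₙ < 0`.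
Then `D = aₙ² (xₙ - yₙ)² > aₙ²`, so only finitely many quadratics occur; a repeated quadratic
repeats its root `xₙ > 1`, and the continued fraction is periodic from there on.
-/

open Set

section CompleteQuotients

variable {x : ℝ}

lemma cq_succ (x : ℝ) (n : ℕ) : cq x (n + 1) = (cq x n - pq x n)⁻¹ := rfl

lemma cq_add (x : ℝ) (m n : ℕ) : cq x (m + n) = cq (cq x m) n := by
  induction n with
  | zero => rfl
  | succ n ih => rw [← add_assoc, cq, cq, ih]

lemma irrational_cq (hx : Irrational x) (n : ℕ) : Irrational (cq x n) := by
  induction n with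
  | zero => exact hx
  | succ n ih => rw [cq_succ]; exact (ih.sub_intCast _).inv

lemma cq_sub_pq_mem_Ioo (hx : Irrational x) (n : ℕ) : cq x n - pq x n ∈ Ioo 0 1 :=
  ⟨Int.fract_pos.2 ((irrational_cq hx n).ne_int _), Int.fract_lt_one _⟩

lemma one_lt_cq (hx : Irrational x) {n : ℕ} (hn : n ≠ 0) : 1 < cq x n := by
  obtain ⟨m, rfl⟩ := Nat.exists_eq_succ_of_ne_zero hn
  obtain ⟨h0, h1⟩ := cq_sub_pq_mem_Ioo hx m
  exact (one_lt_inv₀ h0).2 h1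

lemma one_le_pq (hx : Irrational x) {n : ℕ} (hn : n ≠ 0) : 1 ≤ pq x n :=
  Int.le_floor.2 (by exact_mod_cast (one_lt_cq hx hn).le)

lemma exists_pq_periodic_of_cq_eq {i j : ℕ} (hij : i ≠ j) (h : cq x i = cq x j) :
    ∃ N T : ℕ, 1 ≤ T ∧ ∀ n, N ≤ n → pq x (n + T) = pq x n := by
  wlog hlt : i < j generalizing i j
  · exact this hij.symm h.symm (by omega)
  refine ⟨i, j - i, by omega, fun n hn => ?_⟩
  obtain ⟨k, rfl⟩ := Nat.exists_eq_add_of_le hn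
  rw [pq, pq, show i + k + (j - i) = j + k by omega, cq_add, cq_add, h]

end CompleteQuotients

section IntegerQuadratics

/-- `q = (a, b, c)` with `a X² + b X + c = a (X - u) (X - v)` and `a ≠ 0`. -/
structure IsRootPair (q : ℤ × ℤ × ℤ) (u v : ℝ) : Prop where
  fst_ne_zero : q.1 ≠ 0
  snd_eq : (q.2.1 : ℝ) = -q.1 * (u + v)
  snd_snd_eq : (q.2.2 : ℝ) = q.1 * (u * v)

def quadDisc (q : ℤ × ℤ × ℤ) : ℤ := discrim q.1 q.2.1 q.2.2

/-- Substituting `X = k + 1 / Y` into `a X² + b X + c` and multiplying by `Y²`. -/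
def quadShift (k : ℤ) (q : ℤ × ℤ × ℤ) : ℤ × ℤ × ℤ :=
  (q.1 * k ^ 2 + q.2.1 * k + q.2.2, 2 * q.1 * k + q.2.1, q.1)

lemma quadDisc_quadShift (k : ℤ) (q : ℤ × ℤ × ℤ) : quadDisc (quadShift k q) = quadDisc q := by
  simp only [quadDisc, quadShift, discrim]
  ring

lemma isRootPair_of_root {a b c : ℤ} {u : ℝ} (ha : a ≠ 0)
    (hu : (a : ℝ) * u ^ 2 + b * u + c = 0) : IsRootPair (a, b, c) u (-(b / a) - u) := by
  have ha' : (a : ℝ) ≠ 0 := Int.cast_ne_zero.2 ha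
  refine ⟨ha, ?_, ?_⟩
  · field_simp
    ring
  · field_simp
    linear_combination hu

namespace IsRootPair

variable {q : ℤ × ℤ × ℤ} {u v : ℝ}

lemma irrational_right (h : IsRootPair q u v) (hu : Irrational u) : Irrational v := by
  have ha : (q.1 : ℝ) ≠ 0 := Int.cast_ne_zero.2 h.fst_ne_zero
  have hv : v = ((-q.2.1 / q.1 : ℚ) : ℝ) - u := by
    push_cast
    rw [h.snd_eq]
    field_simp
    ring
  rw [hv]
  exact hu.ratCast_sub _

lemma quadDisc_eq (h : IsRootPair q u v) : (quadDisc q : ℝ) = q.1 ^ 2 * (u - v) ^ 2 := by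
  simp only [quadDisc, discrim]
  push_cast
  rw [h.snd_eq, h.snd_snd_eq]
  ring

lemma sq_fst_lt_quadDisc (h : IsRootPair q u v) (huv : 1 < |u - v|) : q.1 ^ 2 < quadDisc q := by
  have ha : (0 : ℝ) < q.1 ^ 2 := by positivity [h.fst_ne_zero]
  have : (q.1 : ℝ) ^ 2 < quadDisc q := by
    rw [h.quadDisc_eq]
    exact lt_mul_of_one_lt_right ha (one_lt_sq_iff_one_lt_abs _ |>.2 huv)
  exact_mod_cast this

lemma fst_quadShift (h : IsRootPair q u v) (k : ℤ) :
    ((quadShift k q).1 : ℝ) = q.1 * (k - u) * (k - v) := by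
  simp only [quadShift]
  push_cast
  rw [h.snd_eq, h.snd_snd_eq]
  ring

lemma shift (h : IsRootPair q u v) {k : ℤ} (hu : u ≠ k) (hv : v ≠ k) :
    IsRootPair (quadShift k q) (u - k)⁻¹ (v - k)⁻¹ := by
  have ha : (q.1 : ℝ) ≠ 0 := Int.cast_ne_zero.2 h.fst_ne_zero
  have hu' : u - k ≠ 0 := sub_ne_zero.2 hu
  have hv' : v - k ≠ 0 := sub_ne_zero.2 hv
  refine ⟨?_, ?_, ?_⟩
  · rw [← Int.cast_ne_zero (α := ℝ), h.fst_quadShift]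
    exact mul_ne_zero (mul_ne_zero ha (sub_ne_zero.2 hu.symm)) (sub_ne_zero.2 hv.symm)
  · rw [h.fst_quadShift]
    simp only [quadShift]
    push_cast
    rw [h.snd_eq]
    field_simp
    ring
  · rw [h.fst_quadShift]
    simp only [quadShift]
    field_simp
    ring

lemma abs_fst_quadShift_lt (h : IsRootPair q u v) {k : ℤ} (hu : |u - k| < 1) (hv : |v - k| < 1) :
    |(quadShift k q).1| < |q.1| := by
  have ha : (0 : ℝ) < |(q.1 : ℝ)| := abs_pos.2 (Int.cast_ne_zero.2 h.fst_ne_zero)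
  have : |((quadShift k q).1 : ℝ)| < |(q.1 : ℝ)| := by
    rw [h.fst_quadShift, abs_mul, abs_mul, abs_sub_comm (k : ℝ), abs_sub_comm (k : ℝ)]
    calc |(q.1 : ℝ)| * |u - k| * |v - k| < |(q.1 : ℝ)| * 1 * 1 := by gcongr
      _ = |(q.1 : ℝ)| := by ring
  exact_mod_cast this

lemma eq_of_isRootPair {u' v' : ℝ} (h : IsRootPair q u v) (h' : IsRootPair q u' v')
    (huv' : u ≠ v') : u = u' := by
  have ha : (q.1 : ℝ) ≠ 0 := Int.cast_ne_zero.2 h.fst_ne_zero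
  have hsum : u + v = u' + v' := mul_left_cancel₀ (neg_ne_zero.2 ha) (h.snd_eq.symm.trans h'.snd_eq)
  have hprod : u * v = u' * v' := mul_left_cancel₀ ha (h.snd_snd_eq.symm.trans h'.snd_snd_eq)
  have : (u - u') * (u - v') = 0 := by linear_combination u * hsum - hprod
  exact sub_eq_zero.1 ((mul_eq_zero.1 this).resolve_right (sub_ne_zero.2 huv'))

end IsRootPair

end IntegerQuadratics

section Lagrange

noncomputable def quadSeq (x : ℝ) (q : ℤ × ℤ × ℤ) : ℕ → ℤ × ℤ × ℤ
  | 0 => q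
  | n + 1 => quadShift (pq x n) (quadSeq x q n)

noncomputable def conjSeq (x v : ℝ) : ℕ → ℝ
  | 0 => v
  | n + 1 => (conjSeq x v n - pq x n)⁻¹

variable {x v : ℝ} {q : ℤ × ℤ × ℤ}

lemma quadDisc_quadSeq (x : ℝ) (q : ℤ × ℤ × ℤ) (n : ℕ) : quadDisc (quadSeq x q n) = quadDisc q := by
  induction n with
  | zero => rfl
  | succ n ih => rw [quadSeq, quadDisc_quadShift, ih]

lemma isRootPair_quadSeq (hx : Irrational x) (h : IsRootPair q x v) (n : ℕ) :
    IsRootPair (quadSeq x q n) (cq x n) (conjSeq x v n) := by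
  induction n with
  | zero => exact h
  | succ n ih =>
    rw [cq_succ]
    exact ih.shift ((irrational_cq hx n).ne_int _)
      ((ih.irrational_right (irrational_cq hx n)).ne_int _)

variable (hx : Irrational x) (h : IsRootPair q x v)
include hx h

lemma exists_conjSeq_lt_pq : ∃ n, conjSeq x v n < pq x n := by
  by_contra! hge
  have hirr n : Irrational (conjSeq x v n) :=
    (isRootPair_quadSeq hx h n).irrational_right (irrational_cq hx n)
  have hpos n : 0 < conjSeq x v n - pq x n :=
    sub_pos.2 ((hge n).lt_of_ne ((hirr n).ne_int _).symm)
  have hlt n : conjSeq x v n - pq x n < 1 := by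
    by_contra! h1
    have hle : conjSeq x v (n + 1) ≤ 1 := inv_le_one_of_one_le₀ h1
    have hge' : (1 : ℝ) ≤ conjSeq x v (n + 1) :=
      le_trans (by exact_mod_cast one_le_pq hx n.succ_ne_zero) (hge (n + 1))
    exact (hirr (n + 1)).ne_one (le_antisymm hle hge')
  refine not_strictAnti_of_wellFoundedLT (fun n => (quadSeq x q n).1.natAbs)
    (strictAnti_nat_of_succ_lt fun n => ?_)
  obtain ⟨hx0, hx1⟩ := cq_sub_pq_mem_Ioo hx n
  have := (isRootPair_quadSeq hx h n).abs_fst_quadShift_lt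
    (abs_lt.2 ⟨by linarith, hx1⟩) (abs_lt.2 ⟨by linarith [hpos n], hlt n⟩)
  rw [Int.abs_eq_natAbs, Int.abs_eq_natAbs] at this
  exact_mod_cast this

lemma exists_forall_conjSeq_mem_Ioo : ∃ M, ∀ n ≥ M, conjSeq x v n ∈ Ioo (-1) 0 := by
  obtain ⟨n₀, hn₀⟩ := exists_conjSeq_lt_pq hx h
  have hneg : ∀ n ≥ n₀ + 1, conjSeq x v n < 0 := by
    intro n hn
    induction n, hn using Nat.le_induction with
    | base => exact inv_lt_zero.2 (sub_neg.2 hn₀)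
    | succ n hn ih =>
      have : (1 : ℝ) ≤ pq x n := by exact_mod_cast one_le_pq hx (n := n) (by omega)
      exact inv_lt_zero.2 (by linarith)
  refine ⟨n₀ + 2, fun n hn => ?_⟩
  obtain ⟨m, rfl⟩ : ∃ m, n = m + 1 := ⟨n - 1, by omega⟩
  have hpq : (1 : ℝ) ≤ pq x m := by exact_mod_cast one_le_pq hx (n := m) (by omega)
  have ht : 1 < -(conjSeq x v m - pq x m) := by linarith [hneg m (by omega)]
  refine ⟨?_, inv_lt_zero.2 (by linarith)⟩
  rw [conjSeq, neg_lt, ← inv_neg]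
  exact inv_lt_one_of_one_lt₀ ht

lemma exists_forall_quadSeq_mem : ∃ M R, ∀ n ≥ M,
    quadSeq x q n ∈ Icc (-R) R ×ˢ Icc (-R) R ×ˢ Icc (-R) R := by
  obtain ⟨M, hM⟩ := exists_forall_conjSeq_mem_Ioo hx h
  have hfst : ∀ n ≥ M + 1, (quadSeq x q n).1 ^ 2 < quadDisc q := by
    intro n hn
    rw [← quadDisc_quadSeq x q n]
    refine (isRootPair_quadSeq hx h n).sq_fst_lt_quadDisc (lt_abs.2 (Or.inl ?_))
    linarith [one_lt_cq hx (n := n) (by omega), (hM n (by omega)).2]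
  refine ⟨M + 2, 5 * quadDisc q, fun n hn => ?_⟩
  obtain ⟨m, rfl⟩ : ∃ m, n = m + 1 := ⟨n - 1, by omega⟩
  have ha := hfst (m + 1) (by omega)
  -- the constant term of `quadShift k q` is `q.1`
  have hc : (quadSeq x q (m + 1)).2.2 ^ 2 < quadDisc q := hfst m (by omega)
  have hb := quadDisc_quadSeq x q (m + 1)
  set t := quadSeq x q (m + 1)
  set D := quadDisc q
  have hD : 0 ≤ D := (sq_nonneg _).trans ha.le
  have hb' : t.2.1 ^ 2 ≤ 5 * D := by
    simp only [quadDisc, discrim] at hb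
    nlinarith [sq_nonneg (t.1 + t.2.2), sq_nonneg (t.1 - t.2.2)]
  have hbox : ∀ z : ℤ, z ^ 2 ≤ 5 * D → z ∈ Icc (-(5 * D)) (5 * D) := fun z hz =>
    ⟨by linarith [Int.le_self_sq (-z)], by linarith [Int.le_self_sq z]⟩
  exact ⟨hbox _ (by linarith), hbox _ hb', hbox _ (by linarith)⟩

lemma exists_ne_cq_eq : ∃ i j, i ≠ j ∧ cq x i = cq x j := by
  obtain ⟨M, hM⟩ := exists_forall_conjSeq_mem_Ioo hx h
  obtain ⟨M', R, hR⟩ := exists_forall_quadSeq_mem hx h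
  have hmaps : MapsTo (quadSeq x q) (Ici (M + M' + 1)) (Icc (-R) R ×ˢ Icc (-R) R ×ˢ Icc (-R) R) :=
    fun n hn => hR n (by simp only [mem_Ici] at hn; omega)
  obtain ⟨i, hi, j, hj, hij, heq⟩ := (Ici_infinite _).exists_ne_map_eq_of_mapsTo hmaps
    ((finite_Icc _ _).prod ((finite_Icc _ _).prod (finite_Icc _ _)))
  simp only [mem_Ici] at hi hj
  have hi' := isRootPair_quadSeq hx h i
  rw [heq] at hi'
  refine ⟨i, j, hij, hi'.eq_of_isRootPair (isRootPair_quadSeq hx h j) (ne_of_gt ?_)⟩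
  linarith [one_lt_cq hx (n := i) (by omega), (hM j (by omega)).2]

end Lagrange

/-- Lagrange, 1768: the partial quotients of a quadratic irrational
are eventually periodic. -/
theorem stmt2 (x : ℝ) (hx : Irrational x)
    (A B C : ℤ) (hA : A ≠ 0)
    (hroot : (A : ℝ) * x ^ 2 + (B : ℝ) * x + (C : ℝ) = 0) :
    ∃ N T : ℕ, 1 ≤ T ∧ ∀ n, N ≤ n → pq x (n + T) = pq x n := by
  obtain ⟨i, j, hij, h⟩ := exists_ne_cq_eq hx (isRootPair_of_root hA hroot)
  exact exists_pq_periodic_of_cq_eq hij h
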